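/- For every integer n > 12, the number t_n of integer solutions of the system T_n satisfies t_n > r_3((2 + 2^(2^(n-12)))^(2^(n-12))). -/
import Mathlib


/-- `r3 m` is the number of representations of the integer `m` as a sum of three squares
of integers. -/
noncomputable def r3 (m : ℤ) : ℕ := {a : Fin 3 → ℤ | ∑ i, (a i) ^ 2 = m}.ncard

/-- The system `T_n`, in the unknowns `x 1, …, x n`. -/
def TSys (n : ℕ) (x : ℕ → ℤ) : Prop :=
  (∀ i, 1 ≤ i → i ≤ n - 12 → x i * x i = x (i + 1)) ∧
  x (n - 10) * x (n - 10) = x (n - 10) ∧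
  x (n - 10) + x (n - 10) = x (n - 9) ∧
  x (n - 8) + x (n - 9) = x 1 ∧
  x (n - 8) * x (n - 7) = x (n - 11) ∧
  x (n - 10) * x (n - 7) = x (n - 7) ∧
  x (n - 6) * x (n - 6) = x (n - 5) ∧
  x (n - 4) * x (n - 4) = x (n - 3) ∧
  x (n - 2) * x (n - 2) = x (n - 1) ∧
  x (n - 5) + x (n - 3) = x n ∧
  x (n - 1) + x n = x (n - 11)

/-- Integer solutions of `T_n`, encoded as functions `ℕ → ℤ` vanishing outside `{1, …, n}`. -/
def TSet (n : ℕ) : Set (ℕ → ℤ) :=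
  {x | (∀ i, i = 0 ∨ n < i → x i = 0) ∧ TSys n x}

/- ### index normalization -/

lemma tsys_iff (d : ℕ) (x : ℕ → ℤ) : TSys (d+13) x ↔
    ((∀ i, 1 ≤ i → i ≤ d + 1 → x i * x i = x (i + 1)) ∧
    x (d+3) * x (d+3) = x (d+3) ∧
    x (d+3) + x (d+3) = x (d+4) ∧
    x (d+5) + x (d+4) = x 1 ∧
    x (d+5) * x (d+6) = x (d+2) ∧
    x (d+3) * x (d+6) = x (d+6) ∧
    x (d+7) * x (d+7) = x (d+8) ∧
    x (d+9) * x (d+9) = x (d+10) ∧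
    x (d+11) * x (d+11) = x (d+12) ∧
    x (d+8) + x (d+10) = x (d+13) ∧
    x (d+12) + x (d+13) = x (d+2)) := by
  unfold TSys
  simp only [show d+13-12 = d+1 by omega, show d+13-11 = d+2 by omega,
    show d+13-10 = d+3 by omega, show d+13-9 = d+4 by omega, show d+13-8 = d+5 by omega,
    show d+13-7 = d+6 by omega, show d+13-6 = d+7 by omega, show d+13-5 = d+8 by omega,
    show d+13-4 = d+9 by omega, show d+13-3 = d+10 by omega, show d+13-2 = d+11 by omega,
    show d+13-1 = d+12 by omega]

lemma chain_pow (d : ℕ) (x : ℕ → ℤ) (h : ∀ i, 1 ≤ i → i ≤ d + 1 → x i * x i = x (i+1)) :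
    ∀ j, j ≤ d + 1 → x (j + 1) = x 1 ^ 2 ^ j := by
  intro j
  induction j with
  | zero => simp
  | succ j ih =>
    intro hj
    rw [← h (j+1) (by omega) hj, ih (by omega), ← pow_add]
    congr 1
    rw [pow_succ]; ring

/- ### arithmetic helpers -/

lemma hkey (d : ℕ) : (2:ℤ)^2^(d+1) * (1 + 2^(2^(d+1) - 1)) ^ 2^(d+1)
    = (2 + 2^2^(d+1)) ^ 2^(d+1) := by
  set E := 2^(d+1) with hE
  have h1 : 1 ≤ E := Nat.one_le_two_pow
  have h2 : (2:ℤ)^E = 2 * 2^(E-1) := by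
    conv_lhs => rw [show E = (E-1)+1 by omega]
    rw [pow_succ]; ring
  rw [show (2:ℤ) + 2^E = 2*(1+2^(E-1)) by rw [h2]; ring, mul_pow]

lemma chain_exp (i : ℕ) (h : 1 ≤ i) (c : ℤ) : c ^ 2^(i-1) * c ^ 2^(i-1) = c ^ 2^i := by
  rw [← pow_add]
  congr 1
  conv_rhs => rw [show i = (i-1)+1 by omega]
  rw [pow_succ]; ring

lemma abs_le_mul_self (t : ℤ) : |t| ≤ t * t := by
  rcases eq_or_ne t 0 with rfl | h
  · simp
  · calc |t| = 1 * |t| := (one_mul _).symm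
    _ ≤ |t| * |t| := by
        apply mul_le_mul_of_nonneg_right (Int.one_le_abs h) (abs_nonneg t)
    _ = t * t := abs_mul_abs_self t

/- ### the explicit solutions -/

def sol (d : ℕ) (a : Fin 3 → ℤ) : ℕ → ℤ := fun i =>
  if 1 ≤ i ∧ i ≤ d + 2 then (2 + 2^2^(d+1) : ℤ) ^ 2 ^ (i - 1)
  else if i = d + 3 then 1
  else if i = d + 4 then 2
  else if i = d + 5 then 2^2^(d+1)
  else if i = d + 6 then (1 + 2^(2^(d+1) - 1)) ^ 2^(d+1)
  else if i = d + 7 then a 0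
  else if i = d + 8 then (a 0)^2
  else if i = d + 9 then a 1
  else if i = d + 10 then (a 1)^2
  else if i = d + 11 then a 2
  else if i = d + 12 then (a 2)^2
  else if i = d + 13 then (a 0)^2 + (a 1)^2
  else 0

section soleval
variable {d : ℕ} {a : Fin 3 → ℤ}

lemma sol_chain (i : ℕ) (h1 : 1 ≤ i) (h2 : i ≤ d + 2) :
    sol d a i = (2 + 2^2^(d+1) : ℤ) ^ 2 ^ (i - 1) := by
  simp only [sol]; rw [if_pos ⟨h1, h2⟩]

lemma sol_d3 : sol d a (d+3) = 1 := by simp [sol]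
lemma sol_d4 : sol d a (d+4) = 2 := by simp [sol]
lemma sol_d5 : sol d a (d+5) = 2^2^(d+1) := by simp [sol]
lemma sol_d6 : sol d a (d+6) = (1 + 2^(2^(d+1) - 1)) ^ 2^(d+1) := by simp [sol]
lemma sol_d7 : sol d a (d+7) = a 0 := by simp [sol]
lemma sol_d8 : sol d a (d+8) = (a 0)^2 := by simp [sol]
lemma sol_d9 : sol d a (d+9) = a 1 := by simp [sol]
lemma sol_d10 : sol d a (d+10) = (a 1)^2 := by simp [sol]
lemma sol_d11 : sol d a (d+11) = a 2 := by simp [sol]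
lemma sol_d12 : sol d a (d+12) = (a 2)^2 := by simp [sol]
lemma sol_d13 : sol d a (d+13) = (a 0)^2 + (a 1)^2 := by simp [sol]
lemma sol_out (i : ℕ) (h : i = 0 ∨ d + 13 < i) : sol d a i = 0 := by
  simp only [sol]
  rw [if_neg (by omega), if_neg (by omega), if_neg (by omega), if_neg (by omega),
    if_neg (by omega), if_neg (by omega), if_neg (by omega), if_neg (by omega),
    if_neg (by omega), if_neg (by omega), if_neg (by omega), if_neg (by omega)]

lemma sol_mem (d : ℕ) (a : Fin 3 → ℤ)
    (ha : ∑ i, (a i) ^ 2 = (2 + 2^2^(d+1) : ℤ) ^ 2^(d+1)) :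
    sol d a ∈ TSet (d+13) := by
  have hsum : (a 0)^2 + (a 1)^2 + (a 2)^2 = (2 + 2^2^(d+1) : ℤ) ^ 2^(d+1) := by
    rw [← ha, Fin.sum_univ_three]
  refine ⟨fun i hi => sol_out i hi, (tsys_iff d _).2 ?_⟩
  refine ⟨?_, ?_, ?_, ?_, ?_, ?_, ?_, ?_, ?_, ?_, ?_⟩
  · intro i h1 h2
    rw [sol_chain i h1 (by omega), sol_chain (i+1) (by omega) (by omega),
      Nat.add_sub_cancel, chain_exp i h1]
  · rw [sol_d3]; ring
  · rw [sol_d3, sol_d4]; ring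
  · rw [sol_d4, sol_d5, sol_chain 1 le_rfl (by omega)]
    ring
  · rw [sol_d5, sol_d6, sol_chain (d+2) (by omega) le_rfl, show d+2-1 = d+1 by omega, hkey d]
  · rw [sol_d3, sol_d6]; ring
  · rw [sol_d7, sol_d8]; ring
  · rw [sol_d9, sol_d10]; ring
  · rw [sol_d11, sol_d12]; ring
  · rw [sol_d8, sol_d10, sol_d13]
  · rw [sol_d12, sol_d13, sol_chain (d+2) (by omega) le_rfl, show d+2-1 = d+1 by omega, ← hsum]
    ring

end soleval

/- ### bounds on solutions -/

set_option maxHeartbeats 2000000 in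
lemma tset_bounds (d : ℕ) (x : ℕ → ℤ) (hx : x ∈ TSet (d+13)) :
    |x 1| ≤ (2 + (2:ℤ)^2^(d+1))^2^(d+1) ∧ |x (d+3)| ≤ (2 + (2:ℤ)^2^(d+1))^2^(d+1) ∧
    |x (d+6)| ≤ (2 + (2:ℤ)^2^(d+1))^2^(d+1) ∧ |x (d+7)| ≤ (2 + (2:ℤ)^2^(d+1))^2^(d+1) ∧
    |x (d+9)| ≤ (2 + (2:ℤ)^2^(d+1))^2^(d+1) ∧ |x (d+11)| ≤ (2 + (2:ℤ)^2^(d+1))^2^(d+1) := by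
  set E := 2^(d+1) with hEdef
  have hE : 1 ≤ E := Nat.one_le_two_pow
  set K := (2:ℤ)^E with hKdef
  have hK : (1:ℤ) ≤ K := one_le_pow₀ (by norm_num)
  set B := (2 + K)^E with hBdef
  have hB1 : (1:ℤ) ≤ B := one_le_pow₀ (by linarith)
  have hKB : K + 2 ≤ B := by
    calc K + 2 = 2 + K := by ring
    _ ≤ (2 + K)^E := le_self_pow₀ (by linarith) (by omega)
  obtain ⟨hout, hsys⟩ := hx
  rw [tsys_iff] at hsys
  obtain ⟨hc, e3, e4, e5, e2, e6, e7, e9, e11, e13, e2'⟩ := hsys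
  have hm : x (d+2) = x 1 ^ E := chain_pow d x hc (d+1) le_rfl
  have hsum : x (d+7) * x (d+7) + x (d+9) * x (d+9) + x (d+11) * x (d+11) = x (d+2) := by
    linear_combination e7 + e9 + e11 + e13 + e2'
  have h3 : x (d+3) = 0 ∨ x (d+3) = 1 := by
    rcases mul_eq_zero.mp (show x (d+3) * (x (d+3) - 1) = 0 by linear_combination e3) with h | h
    · exact Or.inl h
    · right; linarith
  rcases h3 with h30 | h31
  · -- degenerate case : everything is zero
    have h6 : x (d+6) = 0 := by rw [h30] at e6; simpa using e6.symm
    have h2z : x (d+2) = 0 := by rw [← e2, h6, mul_zero]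
    have h1z : x 1 = 0 := by
      have h := hm; rw [h2z] at h
      exact (pow_eq_zero_iff (by omega)).mp h.symm
    have h7z : x (d+7) = 0 := by nlinarith [mul_self_nonneg (x (d+9)), mul_self_nonneg (x (d+11)), mul_self_nonneg (x (d+7))]
    have h9z : x (d+9) = 0 := by nlinarith [mul_self_nonneg (x (d+9)), mul_self_nonneg (x (d+11)), mul_self_nonneg (x (d+7))]
    have h11z : x (d+11) = 0 := by nlinarith [mul_self_nonneg (x (d+9)), mul_self_nonneg (x (d+11)), mul_self_nonneg (x (d+7))]
    refine ⟨?_, ?_, ?_, ?_, ?_, ?_⟩ <;> simp [h1z, h30, h6, h7z, h9z, h11z] <;> linarith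
  · -- main case
    have h4 : x (d+4) = 2 := by rw [h31] at e4; linarith
    have h5 : x (d+5) = x 1 - 2 := by linarith
    have hd1 : x (d+5) ∣ x 1 ^ E := ⟨x (d+6), by rw [← hm, ← e2]⟩
    have hd2 : x (d+5) ∣ x 1 ^ E - 2 ^ E := by
      rw [h5]; exact sub_dvd_pow_sub_pow _ _ _
    have hd : x (d+5) ∣ K := by
      have h := dvd_sub hd1 hd2
      simpa using h
    have h5ne : x (d+5) ≠ 0 := by
      rintro h; rw [h] at hd
      have : K = 0 := zero_dvd_iff.mp hd
      linarith
    have habs5 : |x (d+5)| ≤ K := Int.le_of_dvd (by linarith) ((abs_dvd _ _).mpr hd)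
    have habs1 : |x 1| ≤ K + 2 := by
      rw [show x 1 = x (d+5) + 2 by linarith]
      calc |x (d+5) + 2| ≤ |x (d+5)| + |(2:ℤ)| := abs_add_le _ _
      _ ≤ K + 2 := by rw [abs_two]; linarith
    have hx2u : x (d+2) ≤ B := by
      calc x (d+2) ≤ |x (d+2)| := le_abs_self _
      _ = |x 1| ^ E := by rw [hm, abs_pow]
      _ ≤ (2 + K)^E := pow_le_pow_left₀ (abs_nonneg _) (by linarith) E
    have hx2l : (0:ℤ) ≤ x (d+2) := by
      rw [hm, hEdef, pow_succ, pow_mul]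
      exact sq_nonneg _
    refine ⟨by linarith, ?_, ?_, ?_, ?_, ?_⟩
    · rw [h31]; simpa using hB1
    · have h1 : (1:ℤ) ≤ |x (d+5)| := Int.one_le_abs h5ne
      have : |x (d+6)| ≤ |x (d+5)| * |x (d+6)| := le_mul_of_one_le_left (abs_nonneg _) h1
      calc |x (d+6)| ≤ |x (d+5)| * |x (d+6)| := this
      _ = |x (d+2)| := by rw [← abs_mul, e2]
      _ = x (d+2) := abs_of_nonneg hx2l
      _ ≤ B := hx2u
    · calc |x (d+7)| ≤ x (d+7) * x (d+7) := abs_le_mul_self _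
      _ ≤ x (d+2) := by nlinarith [mul_self_nonneg (x (d+9)), mul_self_nonneg (x (d+11))]
      _ ≤ B := hx2u
    · calc |x (d+9)| ≤ x (d+9) * x (d+9) := abs_le_mul_self _
      _ ≤ x (d+2) := by nlinarith [mul_self_nonneg (x (d+7)), mul_self_nonneg (x (d+11))]
      _ ≤ B := hx2u
    · calc |x (d+11)| ≤ x (d+11) * x (d+11) := abs_le_mul_self _
      _ ≤ x (d+2) := by nlinarith [mul_self_nonneg (x (d+7)), mul_self_nonneg (x (d+9))]
      _ ≤ B := hx2u

/- ### finiteness -/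

def Fmap (d : ℕ) (x : ℕ → ℤ) : Fin 6 → ℤ := ![x 1, x (d+3), x (d+6), x (d+7), x (d+9), x (d+11)]

lemma Fmap_injOn (d : ℕ) : Set.InjOn (Fmap d) (TSet (d+13)) := by
  intro x hx y hy h
  have c1 : x 1 = y 1 := by simpa [Fmap] using congrFun h 0
  have c3 : x (d+3) = y (d+3) := by simpa [Fmap] using congrFun h 1
  have c6 : x (d+6) = y (d+6) := by simpa [Fmap] using congrFun h 2
  have c7 : x (d+7) = y (d+7) := by simpa [Fmap] using congrFun h 3
  have c9 : x (d+9) = y (d+9) := by simpa [Fmap] using congrFun h 4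
  have c11 : x (d+11) = y (d+11) := by simpa [Fmap] using congrFun h 5
  obtain ⟨hox, hsx⟩ := hx
  obtain ⟨hoy, hsy⟩ := hy
  rw [tsys_iff] at hsx hsy
  obtain ⟨hcx, ex3, ex4, ex5, ex2, ex6, ex7, ex9, ex11, ex13, ex2'⟩ := hsx
  obtain ⟨hcy, ey3, ey4, ey5, ey2, ey6, ey7, ey9, ey11, ey13, ey2'⟩ := hsy
  have hch : ∀ j, j ≤ d+1 → x (j+1) = y (j+1) := fun j hj => by
    rw [chain_pow d x hcx j hj, chain_pow d y hcy j hj, c1]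
  have c4 : x (d+4) = y (d+4) := by rw [← ex4, ← ey4, c3]
  have c5 : x (d+5) = y (d+5) := by linarith
  have c8 : x (d+8) = y (d+8) := by rw [← ex7, ← ey7, c7]
  have c10 : x (d+10) = y (d+10) := by rw [← ex9, ← ey9, c9]
  have c12 : x (d+12) = y (d+12) := by rw [← ex11, ← ey11, c11]
  have c13 : x (d+13) = y (d+13) := by rw [← ex13, ← ey13, c8, c10]
  funext i
  by_cases hi : i = 0 ∨ d+13 < i
  · rw [hox i hi, hoy i hi]
  push_neg at hi
  by_cases hle : i ≤ d+2
  · obtain ⟨j, rfl⟩ : ∃ j, i = j+1 := ⟨i-1, by omega⟩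
    exact hch j (by omega)
  · have hcase : i = d+3 ∨ i = d+4 ∨ i = d+5 ∨ i = d+6 ∨ i = d+7 ∨ i = d+8 ∨ i = d+9 ∨
        i = d+10 ∨ i = d+11 ∨ i = d+12 ∨ i = d+13 := by omega
    rcases hcase with rfl|rfl|rfl|rfl|rfl|rfl|rfl|rfl|rfl|rfl|rfl <;>
      first
      | exact c3 | exact c4 | exact c5 | exact c6 | exact c7 | exact c8 | exact c9
      | exact c10 | exact c11 | exact c12 | exact c13

lemma tset_finite (d : ℕ) : (TSet (d+13)).Finite := by
  apply Set.Finite.of_finite_image (f := Fmap d) _ (Fmap_injOn d)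
  apply Set.Finite.subset (Set.Finite.pi
    (fun _ : Fin 6 => Set.finite_Icc (-((2 + (2:ℤ)^2^(d+1))^2^(d+1))) ((2 + (2:ℤ)^2^(d+1))^2^(d+1))))
  rintro _ ⟨x, hx, rfl⟩
  rw [Set.mem_univ_pi]
  intro i
  obtain ⟨b1, b3, b6, b7, b9, b11⟩ := tset_bounds d x hx
  fin_cases i <;> simp only [Fmap, Set.mem_Icc, Matrix.cons_val_zero, Matrix.cons_val_one,
    Matrix.head_cons, Matrix.cons_val_two, Matrix.tail_cons, Matrix.cons_val_three,
    Matrix.cons_val_four, Matrix.cons_val_fin_one] <;>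
    first
    | exact abs_le.mp b1 | exact abs_le.mp b3 | exact abs_le.mp b6
    | exact abs_le.mp b7 | exact abs_le.mp b9 | exact abs_le.mp b11

/- ### main theorem -/

lemma main_lemma (d : ℕ) : r3 ((2 + 2 ^ 2 ^ (d+1) : ℤ) ^ 2 ^ (d+1)) < (TSet (d+13)).ncard := by
  set m : ℤ := (2 + 2 ^ 2 ^ (d+1) : ℤ) ^ 2 ^ (d+1) with hm
  set S : Set (Fin 3 → ℤ) := {a : Fin 3 → ℤ | ∑ i, (a i) ^ 2 = m} with hS
  have himg : sol d '' S ⊆ TSet (d+13) := by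
    rintro _ ⟨a, ha, rfl⟩
    exact sol_mem d a ha
  have hzero : (fun _ : ℕ => (0:ℤ)) ∈ TSet (d+13) := by
    refine ⟨fun i _ => rfl, (tsys_iff d _).2 ?_⟩
    norm_num
  have hzno : (fun _ : ℕ => (0:ℤ)) ∉ sol d '' S := by
    rintro ⟨a, _, hfa⟩
    have h := congrFun hfa (d+3)
    rw [sol_d3] at h
    exact one_ne_zero h
  have hinj : Set.InjOn (sol d) S := by
    intro a _ b _ h
    funext i
    fin_cases i
    · have := congrFun h (d+7); rwa [sol_d7, sol_d7] at this
    · have := congrFun h (d+9); rwa [sol_d9, sol_d9] at this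
    · have := congrFun h (d+11); rwa [sol_d11, sol_d11] at this
  calc r3 m = S.ncard := rfl
  _ = (sol d '' S).ncard := (Set.ncard_image_of_injOn hinj).symm
  _ < (TSet (d+13)).ncard :=
      Set.ncard_lt_ncard ((Set.ssubset_iff_of_subset himg).2 ⟨_, hzero, hzno⟩) (tset_finite d)


theorem stmt10 (n : ℕ) (hn : 12 < n) :
    r3 ((2 + 2 ^ 2 ^ (n - 12) : ℤ) ^ 2 ^ (n - 12)) < (TSet n).ncard := by
  obtain ⟨d, rfl⟩ : ∃ d, n = d + 13 := ⟨n - 13, by omega⟩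
  simpa only [show d + 13 - 12 = d + 1 by omega] using main_lemma d
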